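/- For every constant C > 0, the composite function G(x) := g(e(x)) is continuous and strictly decreasing on (0,∞), and it maps (0,∞) bijectively onto the open interval ( 2C/(2C+1), L ), where L = ( −(2C−1) + √((2C−1)² + 8C) )/2. -/

import Mathlib

/-!
`g y` is the positive root `t` of `t² + (2C - 1 + y(2C + 1)) t = 2C(y + 1)`, which factors as
`(1 - t)(t + 2C) = y((2C + 1) t - 2C)`. Solving this for `y` shows that `g` is a strictly
decreasing bijection from `(0, ∞)` onto `(2C/(2C + 1), 1)`; and `L = g 0 = 1`, the discriminant at
`0` being `(2C + 1)²`. On the other side `e x = (2/x²)(eˣ - 1 - x - x²/2)` is a strictly increasing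
bijection of `(0, ∞)` onto itself: `e' x` has the sign of `(x - 2) eˣ + x + 2 > 0`, `e x = O(x)` at
`0`, and `e` grows like `eˣ/x²`.
-/

open Set

/-- The function e(x) = (2/x²)·eˣ − (1 + 2/x + 2/x²). -/
noncomputable def eFun (x : ℝ) : ℝ :=
  2 / x ^ 2 * Real.exp x - (1 + 2 / x + 2 / x ^ 2)

/-- The function g(x) for a parameter C. -/
noncomputable def gFun (C x : ℝ) : ℝ :=
  (1 / 2) * (-(2 * C - 1 + x * (2 * C + 1)) +
    Real.sqrt ((2 * C - 1 + x * (2 * C + 1)) ^ 2 + 8 * C * (x + 1)))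

/-- The composite G = g ∘ e. -/
noncomputable def GFun (C x : ℝ) : ℝ := gFun C (eFun x)

open Filter Topology

section QuadraticRoot

variable {b c t : ℝ}

lemma sq_add_mul_eq_of_eq_neg_add_sqrt (hd : 0 ≤ b ^ 2 + 4 * c)
    (ht : t = (-b + √(b ^ 2 + 4 * c)) / 2) : t ^ 2 + b * t = c := by
  have := Real.sq_sqrt hd
  subst ht
  linear_combination this / 4

lemma eq_neg_add_sqrt_of_sq_add_mul_eq (ht : 0 ≤ 2 * t + b) (h : t ^ 2 + b * t = c) :
    t = (-b + √(b ^ 2 + 4 * c)) / 2 := by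
  rw [show b ^ 2 + 4 * c = (2 * t + b) ^ 2 by rw [← h]; ring, Real.sqrt_sq ht]
  ring

end QuadraticRoot

section gFun

variable {C y t : ℝ}

lemma gFun_eq_neg_add_sqrt (C y : ℝ) :
    gFun C y = (-(2 * C - 1 + y * (2 * C + 1)) +
      √((2 * C - 1 + y * (2 * C + 1)) ^ 2 + 4 * (2 * C * (y + 1)))) / 2 := by
  rw [gFun]; ring_nf

lemma sq_add_mul_gFun_eq (hC : 0 ≤ C) (hy : -1 ≤ y) :
    gFun C y ^ 2 + (2 * C - 1 + y * (2 * C + 1)) * gFun C y = 2 * C * (y + 1) :=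
  sq_add_mul_eq_of_eq_neg_add_sqrt (by nlinarith [sq_nonneg (2 * C - 1 + y * (2 * C + 1))])
    (gFun_eq_neg_add_sqrt C y)

-- `t² + (2C - 1 + y(2C + 1)) t - 2C(y + 1) = (t - 1)(t + 2C) + y((2C + 1) t - 2C)`
lemma one_sub_gFun_mul (hC : 0 ≤ C) (hy : -1 ≤ y) :
    (1 - gFun C y) * (gFun C y + 2 * C) = y * ((2 * C + 1) * gFun C y - 2 * C) := by
  linear_combination -(sq_add_mul_gFun_eq hC hy)

lemma gFun_eq_of_one_sub_mul (hC : 0 < C) (hy : -1 < y) (ht : 0 < t)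
    (h : (1 - t) * (t + 2 * C) = y * ((2 * C + 1) * t - 2 * C)) : gFun C y = t := by
  have hroot : t ^ 2 + (2 * C - 1 + y * (2 * C + 1)) * t = 2 * C * (y + 1) := by
    linear_combination -h
  have htb : 0 < t + (2 * C - 1 + y * (2 * C + 1)) := by
    have : 0 < t * (t + (2 * C - 1 + y * (2 * C + 1))) := by
      nlinarith [mul_pos hC (neg_lt_iff_pos_add.mp hy)]
    exact pos_of_mul_pos_right this ht.le
  rw [gFun_eq_neg_add_sqrt]
  exact (eq_neg_add_sqrt_of_sq_add_mul_eq (by linarith) hroot).symm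

lemma gFun_pos (hC : 0 < C) (hy : -1 < y) : 0 < gFun C y := by
  rw [gFun_eq_neg_add_sqrt]
  set b := 2 * C - 1 + y * (2 * C + 1)
  have hs := Real.sq_sqrt (by nlinarith [sq_nonneg b] : 0 ≤ b ^ 2 + 4 * (2 * C * (y + 1)))
  nlinarith [Real.sqrt_nonneg (b ^ 2 + 4 * (2 * C * (y + 1))),
    mul_pos hC (neg_lt_iff_pos_add.mp hy)]

lemma div_lt_gFun (hC : 0 < C) (hy : 0 ≤ y) : 2 * C / (2 * C + 1) < gFun C y := by
  rw [div_lt_iff₀ (by linarith)]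
  by_contra! hle
  have h := one_sub_gFun_mul hC.le (by linarith : -1 ≤ y)
  have hg := gFun_pos hC (by linarith : -1 < y)
  nlinarith [mul_nonneg hy (by linarith : 0 ≤ 2 * C - (2 * C + 1) * gFun C y)]

lemma gFun_lt_one (hC : 0 < C) (hy : 0 < y) : gFun C y < 1 := by
  have h := one_sub_gFun_mul hC.le (by linarith : -1 ≤ y)
  have hg := gFun_pos hC (by linarith : -1 < y)
  have ha := div_lt_gFun hC hy.le
  rw [div_lt_iff₀ (by linarith)] at ha
  nlinarith [mul_pos hy (by linarith : 0 < (2 * C + 1) * gFun C y - 2 * C)]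

lemma strictAntiOn_gFun (hC : 0 < C) : StrictAntiOn (gFun C) (Ici 0) := by
  intro x (hx : 0 ≤ x) y (hy : 0 ≤ y) hxy
  have hrx := sq_add_mul_gFun_eq hC.le (by linarith : -1 ≤ x)
  have hry := sq_add_mul_gFun_eq hC.le (by linarith : -1 ≤ y)
  have hdiff : (gFun C y - gFun C x) * (gFun C y + gFun C x + (2 * C - 1 + y * (2 * C + 1))) =
      (y - x) * (2 * C - (2 * C + 1) * gFun C x) := by
    linear_combination hry - hrx
  have hgx := gFun_pos hC (by linarith : -1 < x)
  have hgy := gFun_pos hC (by linarith : -1 < y)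
  have hsum : 0 < gFun C y + (2 * C - 1 + y * (2 * C + 1)) := by
    refine pos_of_mul_pos_right (a := gFun C y) ?_ hgy.le
    nlinarith [mul_pos hC (by linarith : 0 < y + 1)]
  have hax := div_lt_gFun hC hx
  rw [div_lt_iff₀ (by linarith)] at hax
  nlinarith [mul_pos (sub_pos.2 hxy) (by linarith : 0 < (2 * C + 1) * gFun C x - 2 * C)]

lemma continuous_gFun (C : ℝ) : Continuous (gFun C) := by
  unfold gFun; fun_prop

lemma surjOn_gFun (hC : 0 < C) : SurjOn (gFun C) (Ioi 0) (Ioo (2 * C / (2 * C + 1)) 1) := by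
  rintro t ⟨hat, ht1⟩
  have hden : 0 < (2 * C + 1) * t - 2 * C := by
    rw [div_lt_iff₀ (by linarith)] at hat; linarith
  have ht : 0 < t := (div_pos (by linarith) (by linarith)).trans hat
  refine ⟨(1 - t) * (t + 2 * C) / ((2 * C + 1) * t - 2 * C),
    div_pos (mul_pos (by linarith) (by linarith)) hden, gFun_eq_of_one_sub_mul hC ?_ ht ?_⟩
  · exact (neg_one_lt_zero).trans (div_pos (mul_pos (by linarith) (by linarith)) hden)
  · exact (div_mul_cancel₀ _ hden.ne').symm

end gFun

lemma pos_of_hasDerivAt_of_deriv_pos {f f' : ℝ → ℝ} (hf : ∀ x, HasDerivAt f (f' x) x)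
    (h0 : f 0 = 0) (hf' : ∀ x, 0 < x → 0 < f' x) {x : ℝ} (hx : 0 < x) : 0 < f x := by
  have hmono : StrictMonoOn f (Ici 0) :=
    strictMonoOn_of_deriv_pos (convex_Ici 0) (fun y _ => (hf y).continuousAt.continuousWithinAt)
      fun y hy => by
        rw [interior_Ici] at hy
        rw [(hf y).deriv]
        exact hf' y hy
  simpa [h0] using hmono self_mem_Ici hx.le hx

section eFun

open Real

variable {x : ℝ}

lemma sub_one_mul_exp_add_one_pos (hx : 0 < x) : 0 < (x - 1) * exp x + 1 := by
  refine pos_of_hasDerivAt_of_deriv_pos (f := fun y => (y - 1) * exp y + 1)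
    (f' := fun y => y * exp y) (fun y => ?_) (by simp) (fun y hy => mul_pos hy (exp_pos y)) hx
  refine ((((hasDerivAt_id y).sub_const 1).mul (hasDerivAt_exp y)).add_const 1).congr_deriv ?_
  simp only [id_eq]; ring

lemma sub_two_mul_exp_add_pos (hx : 0 < x) : 0 < (x - 2) * exp x + x + 2 := by
  refine pos_of_hasDerivAt_of_deriv_pos (f := fun y => (y - 2) * exp y + y + 2)
    (f' := fun y => (y - 1) * exp y + 1) (fun y => ?_) (by simp)
    (fun y hy => sub_one_mul_exp_add_one_pos hy) hx
  refine ((((hasDerivAt_id y).sub_const 2).mul (hasDerivAt_exp y)).add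
    (hasDerivAt_id y)).add_const 2 |>.congr_deriv ?_
  simp only [id_eq]; ring

lemma eFun_eq (hx : x ≠ 0) : eFun x = 2 / x ^ 2 * (exp x - (1 + x + x ^ 2 / 2)) := by
  rw [eFun]; field_simp; ring

lemma eFun_pos (hx : 0 < x) : 0 < eFun x := by
  have h := sum_le_exp_of_nonneg hx.le 4
  simp only [Finset.sum_range_succ, Finset.sum_range_zero, Nat.factorial] at h
  rw [eFun_eq hx.ne']
  refine mul_pos (by positivity) ?_
  norm_num at h
  nlinarith [pow_pos hx 3]

lemma eFun_le (hx₀ : 0 < x) (hx₁ : x ≤ 1) : eFun x ≤ 4 / 9 * x := by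
  have h := exp_bound' hx₀.le hx₁ (n := 3) (by norm_num)
  simp only [Finset.sum_range_succ, Finset.sum_range_zero, Nat.factorial] at h
  norm_num at h
  rw [eFun_eq hx₀.ne', div_mul_eq_mul_div, div_le_iff₀ (by positivity)]
  nlinarith

lemma hasDerivAt_eFun (hx : x ≠ 0) :
    HasDerivAt eFun (2 / x ^ 3 * ((x - 2) * exp x + x + 2)) x := by
  have hp : HasDerivAt (fun y => 2 / y ^ 2) ((0 * x ^ 2 - 2 * (2 * x ^ 1)) / (x ^ 2) ^ 2) x :=
    (hasDerivAt_const x 2).div (hasDerivAt_pow 2 x) (pow_ne_zero 2 hx)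
  have hq : HasDerivAt (fun y => 2 / y) ((0 * x - 2 * 1) / x ^ 2) x :=
    (hasDerivAt_const x 2).div (hasDerivAt_id x) hx
  refine ((hp.mul (hasDerivAt_exp x)).sub (((hasDerivAt_const x 1).add hq).add hp)).congr_deriv ?_
  field_simp
  ring

lemma continuousOn_eFun : ContinuousOn eFun (Ioi 0) := fun _ hx =>
  (hasDerivAt_eFun (ne_of_gt hx)).continuousAt.continuousWithinAt

lemma strictMonoOn_eFun : StrictMonoOn eFun (Ioi 0) := by
  refine strictMonoOn_of_deriv_pos (convex_Ioi 0) continuousOn_eFun fun x hx => ?_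
  rw [interior_Ioi] at hx
  rw [(hasDerivAt_eFun (ne_of_gt hx)).deriv]
  exact mul_pos (div_pos two_pos (pow_pos hx 3)) (sub_two_mul_exp_add_pos hx)

lemma tendsto_eFun_nhdsGT_zero : Tendsto eFun (𝓝[>] 0) (𝓝 0) := by
  have hlin : Tendsto (fun x : ℝ => 4 / 9 * x) (𝓝[>] 0) (𝓝 0) := by
    refine (Continuous.tendsto' ?_ 0 0 (mul_zero _)).mono_left nhdsWithin_le_nhds
    fun_prop
  refine tendsto_of_tendsto_of_tendsto_of_le_of_le' tendsto_const_nhds hlin ?_ ?_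
  · filter_upwards [self_mem_nhdsWithin] with x hx using (eFun_pos hx).le
  · filter_upwards [Ioc_mem_nhdsGT one_pos] with x hx using eFun_le hx.1 hx.2

lemma tendsto_eFun_atTop : Tendsto eFun atTop atTop := by
  have h : Tendsto (fun x : ℝ => 2 * (exp x / x ^ 2) - 5) atTop atTop :=
    tendsto_atTop_add_const_right _ _
      ((tendsto_exp_div_pow_atTop 2).const_mul_atTop (by norm_num))
  refine tendsto_atTop_mono' _ ?_ h
  filter_upwards [eventually_ge_atTop (1 : ℝ)] with x hx
  have h1 : 2 / x ≤ 2 := by rw [div_le_iff₀ (by linarith)]; nlinarith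
  have h2 : 2 / x ^ 2 ≤ 2 := by rw [div_le_iff₀ (by positivity)]; nlinarith
  rw [eFun, mul_div_assoc', div_mul_eq_mul_div]
  linarith

lemma surjOn_eFun : SurjOn eFun (Ioi 0) (Ioi 0) :=
  isPreconnected_Ioi.intermediate_value_Ioi (l₁ := 𝓝[>] 0) inf_le_right
    (le_principal_iff.2 (Ioi_mem_atTop 0)) continuousOn_eFun tendsto_eFun_nhdsGT_zero
    tendsto_eFun_atTop

end eFun

/-- G = g ∘ e is continuous and strictly decreasing on (0,∞) and
maps (0,∞) bijectively onto (2C/(2C+1), L). -/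
theorem stmt_5 (C : ℝ) (hC : 0 < C) :
    ContinuousOn (GFun C) (Ioi (0 : ℝ)) ∧
    StrictAntiOn (GFun C) (Ioi (0 : ℝ)) ∧
    BijOn (GFun C) (Ioi (0 : ℝ))
      (Ioo (2 * C / (2 * C + 1))
        ((-(2 * C - 1) + Real.sqrt ((2 * C - 1) ^ 2 + 8 * C)) / 2)) := by
  have hL : (-(2 * C - 1) + √((2 * C - 1) ^ 2 + 8 * C)) / 2 = 1 := by
    rw [show (2 * C - 1) ^ 2 + 8 * C = (2 * C + 1) ^ 2 by ring, Real.sqrt_sq (by linarith)]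
    ring
  have hanti : StrictAntiOn (GFun C) (Ioi 0) :=
    (strictAntiOn_gFun hC).comp_strictMonoOn strictMonoOn_eFun fun _ hx => (eFun_pos hx).le
  rw [hL]
  refine ⟨(continuous_gFun C).comp_continuousOn continuousOn_eFun, hanti,
    fun x hx => ⟨div_lt_gFun hC (eFun_pos hx).le, gFun_lt_one hC (eFun_pos hx)⟩, hanti.injOn, ?_⟩
  exact (surjOn_gFun hC).comp surjOn_eFun
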